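/- arXiv:1909.10765 — 4 statements merged into one kernel-verified Lean document; each statement's English description precedes it below -/
import Mathlib

section
/- Let t > 0, λ > 0, μ > 0 with μ ≠ λ, and set ξ = log(λ/μ)/(λ − μ) and γ(t,λ,μ) = (λ − μ e^{(λ−μ)t})/(λ e^{(λ−μ)t} − μ). Then γ(t,λ,μ) < 0 if t > ξ, γ(t,λ,μ) > 0 if t < ξ, and γ(t,λ,μ) = 0 if t = ξ. -/
/-!
Both `γ` and `ξ` are symmetric in `λ, μ` (multiply numerator and denominator of `γ` by
`e^{(μ-λ)t}`), so we may assume `μ < λ`. Then the denominator `λ e^{(λ-μ)t} - μ` is positive for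
`t > 0`, while the numerator `λ - μ e^{(λ-μ)t}` is strictly decreasing in `t` and vanishes at
`t = ξ`, because `e^{(λ-μ)ξ} = λ/μ`.
-/

open Real

namespace BirthDeath

noncomputable def gamma (t lam mu : ℝ) : ℝ :=
  (lam - mu * exp ((lam - mu) * t)) / (lam * exp ((lam - mu) * t) - mu)

noncomputable def xi (lam mu : ℝ) : ℝ :=
  log (lam / mu) / (lam - mu)

lemma xi_comm (lam mu : ℝ) : xi lam mu = xi mu lam := by
  rw [xi, xi, ← neg_div_neg_eq, ← log_inv, inv_div, neg_sub]

lemma gamma_comm (t lam mu : ℝ) : gamma t lam mu = gamma t mu lam := by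
  have hE : exp ((mu - lam) * t) = (exp ((lam - mu) * t))⁻¹ := by
    rw [← exp_neg, ← neg_mul, neg_sub]
  have hpos := exp_pos ((lam - mu) * t)
  rw [gamma, gamma, hE]
  field_simp
  rw [← neg_div_neg_eq]
  ring_nf

variable {t lam mu : ℝ}

lemma strictAnti_sub_mul_exp (hmu : 0 < mu) (hlm : mu < lam) :
    StrictAnti fun s => lam - mu * exp ((lam - mu) * s) := by
  intro a b hab
  have hexp : exp ((lam - mu) * a) < exp ((lam - mu) * b) :=
    exp_lt_exp.2 (mul_lt_mul_of_pos_left hab (sub_pos.2 hlm))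
  exact sub_lt_sub_left (mul_lt_mul_of_pos_left hexp hmu) lam

lemma sub_mul_exp_mul_xi (hlam : 0 < lam) (hmu : 0 < mu) (hne : lam ≠ mu) :
    lam - mu * exp ((lam - mu) * xi lam mu) = 0 := by
  rw [xi, mul_div_cancel₀ _ (sub_ne_zero.2 hne), exp_log (div_pos hlam hmu),
    mul_div_cancel₀ _ hmu.ne', sub_self]

lemma mul_exp_sub_pos (ht : 0 < t) (hlam : 0 < lam) (hlm : mu < lam) :
    0 < lam * exp ((lam - mu) * t) - mu := by
  have hexp : 1 < exp ((lam - mu) * t) := one_lt_exp_iff.2 (mul_pos (sub_pos.2 hlm) ht)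
  nlinarith

lemma gamma_neg_iff_of_lt (ht : 0 < t) (hmu : 0 < mu) (hlm : mu < lam) :
    gamma t lam mu < 0 ↔ xi lam mu < t := by
  rw [gamma, div_lt_iff₀ (mul_exp_sub_pos ht (hmu.trans hlm) hlm), zero_mul,
    ← sub_mul_exp_mul_xi (hmu.trans hlm) hmu hlm.ne']
  exact (strictAnti_sub_mul_exp hmu hlm).lt_iff_gt

lemma gamma_pos_iff_of_lt (ht : 0 < t) (hmu : 0 < mu) (hlm : mu < lam) :
    0 < gamma t lam mu ↔ t < xi lam mu := by
  rw [gamma, div_pos_iff_of_pos_right (mul_exp_sub_pos ht (hmu.trans hlm) hlm),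
    ← sub_mul_exp_mul_xi (hmu.trans hlm) hmu hlm.ne']
  exact (strictAnti_sub_mul_exp hmu hlm).lt_iff_gt

lemma gamma_eq_zero_iff_of_lt (ht : 0 < t) (hmu : 0 < mu) (hlm : mu < lam) :
    gamma t lam mu = 0 ↔ t = xi lam mu := by
  rw [gamma, div_eq_zero_iff, or_iff_left (mul_exp_sub_pos ht (hmu.trans hlm) hlm).ne',
    ← sub_mul_exp_mul_xi (hmu.trans hlm) hmu hlm.ne']
  exact (strictAnti_sub_mul_exp hmu hlm).injective.eq_iff

end BirthDeath

open BirthDeath in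
theorem stmt_2 (t lam mu : ℝ) (ht : 0 < t) (hlam : 0 < lam) (hmu : 0 < mu) (hne : mu ≠ lam) :
    ((t > Real.log (lam / mu) / (lam - mu) →
        (lam - mu * Real.exp ((lam - mu) * t)) / (lam * Real.exp ((lam - mu) * t) - mu) < 0) ∧
     (t < Real.log (lam / mu) / (lam - mu) →
        0 < (lam - mu * Real.exp ((lam - mu) * t)) / (lam * Real.exp ((lam - mu) * t) - mu)) ∧
     (t = Real.log (lam / mu) / (lam - mu) →
        (lam - mu * Real.exp ((lam - mu) * t)) / (lam * Real.exp ((lam - mu) * t) - mu) = 0)) := by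
  change (xi lam mu < t → gamma t lam mu < 0) ∧ (t < xi lam mu → 0 < gamma t lam mu) ∧
    (t = xi lam mu → gamma t lam mu = 0)
  wlog hlm : mu < lam generalizing lam mu
  · rw [gamma_comm, xi_comm]
    exact this mu lam hmu hlam hne.symm (hne.lt_or_gt.resolve_left hlm)
  exact ⟨(gamma_neg_iff_of_lt ht hmu hlm).2, (gamma_pos_iff_of_lt ht hmu hlm).2,
    (gamma_eq_zero_iff_of_lt ht hmu hlm).2⟩
end

section
/- Let a, b be positive integers, k an integer with k ≤ 1, and z a real number. Define F(b) = Σ_{h=0}^{min(a,b)} [C(a,h)·C(b,h)/C(a+b−k,h)]·z^h. Then F satisfies the three-term recurrence (a+b+1−k)(a+b−k)·F(b+1) − (a+b−k)(a+b+1−k + (a−b)z)·F(b) − b(b−k)z·F(b−1) = 0. -/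
open Finset

private lemma d1 (n h : ℕ) (hn : h ≤ n) :
    ((n.choose (h+1) : ℝ)) = ((n:ℝ) - h) * n.choose h / (h+1) := by
  have e := Nat.choose_succ_right_eq n h
  have e' : ((n.choose (h+1) : ℝ)) * ((h:ℝ)+1) = (n.choose h : ℝ) * ((n:ℝ) - h) := by
    have := congrArg (fun t : ℕ => (t:ℝ)) e
    push_cast [Nat.cast_sub hn] at this
    linarith
  rw [eq_div_iff (by positivity)]
  linarith

private lemma d2 (n h : ℕ) :
    (((n+1).choose (h+1) : ℝ)) = ((n:ℝ)+1) * n.choose h / (h+1) := by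
  have e := Nat.add_one_mul_choose_eq n h
  have e' : ((n:ℝ)+1) * n.choose h = ((n+1).choose (h+1) : ℝ) * ((h:ℝ)+1) := by
    exact_mod_cast e
  rw [eq_div_iff (by positivity)]
  linarith

private lemma d3 (n h : ℕ) (h1 : 1 ≤ n) (hn : h ≤ n) :
    (((n-1).choose h : ℝ)) = ((n:ℝ) - h) * n.choose h / n := by
  have e := Nat.choose_mul_succ_eq (n-1) h
  have hn1 : n - 1 + 1 = n := by omega
  rw [hn1] at e
  have e' : ((n-1).choose h : ℝ) * n = (n.choose h : ℝ) * ((n:ℝ) - h) := by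
    have := congrArg (fun t : ℕ => (t:ℝ)) e
    push_cast [Nat.cast_sub hn] at this
    linarith
  have hn0 : (n:ℝ) ≠ 0 := by positivity
  rw [eq_div_iff hn0]
  linarith

private lemma key (a b m h : ℕ) (ha : 1 ≤ a) (hb : 1 ≤ b) (hm : a + b ≤ m + 1)
    (hh1 : h ≤ a) (hh2 : h ≤ b + 1) :
    ((m:ℝ)+1) * m * ((a.choose (h+1) : ℝ) * ((b+1).choose (h+1)) / ((m+1).choose (h+1)))
      - (m:ℝ) * ((m:ℝ)+1) * ((a.choose (h+1) : ℝ) * (b.choose (h+1)) / (m.choose (h+1)))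
      - (m:ℝ) * ((a:ℝ) - b) * ((a.choose h : ℝ) * (b.choose h) / (m.choose h))
      - (b:ℝ) * ((m:ℝ) - a) * ((a.choose h : ℝ) * ((b-1).choose h) / ((m-1).choose h)) = 0 := by
  have hm1 : 1 ≤ m := by omega
  by_cases hha : h + 1 ≤ a
  · by_cases hhb : h + 1 ≤ b
    · -- generic case
      have hmh : h + 1 ≤ m := by omega
      have hChm : (m.choose h : ℝ) ≠ 0 :=
        Nat.cast_ne_zero.2 (Nat.choose_pos (show h ≤ m by omega)).ne'
      rw [d1 a h (by omega), d1 b h (by omega), d1 m h (by omega), d2 b h, d2 m h,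
        d3 b h hb (by omega), d3 m h hm1 (by omega)]
      have h1 : ((h:ℝ)+1) ≠ 0 := by positivity
      have h2 : (m:ℝ) ≠ 0 := by positivity
      have h3 : ((m:ℝ) - h) ≠ 0 := by
        have : (h:ℝ) + 1 ≤ m := by exact_mod_cast hmh
        intro hc; nlinarith
      have h4 : (b:ℝ) ≠ 0 := by positivity
      have h5 : ((m:ℝ)+1) ≠ 0 := by positivity
      field_simp
      ring
    · rcases (show h = b ∨ h = b + 1 by omega) with hcase | hcase
      · -- h = b, so b + 1 ≤ a
        rw [hcase]
        rw [hcase] at hha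
        have hChm : (m.choose b : ℝ) ≠ 0 :=
          Nat.cast_ne_zero.2 (Nat.choose_pos (show b ≤ m by omega)).ne'
        rw [d1 a b (by omega), d2 m b]
        simp only [Nat.choose_self, Nat.choose_succ_self, Nat.cast_zero,
          Nat.choose_eq_zero_of_lt (show b - 1 < b by omega), Nat.cast_one]
        have h1 : ((b:ℝ)+1) ≠ 0 := by positivity
        have h5 : ((m:ℝ)+1) ≠ 0 := by positivity
        field_simp
        ring
      · -- h = b + 1
        rw [hcase]
        simp [Nat.choose_eq_zero_of_lt (show b < b + 1 by omega),
          Nat.choose_eq_zero_of_lt (show b + 1 < b + 1 + 1 by omega),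
          Nat.choose_eq_zero_of_lt (show b < b + 1 + 1 by omega),
          Nat.choose_eq_zero_of_lt (show b - 1 < b + 1 by omega)]
  · -- h = a
    have hcase : h = a := by omega
    rw [hcase]
    simp only [Nat.choose_succ_self, Nat.cast_zero, zero_mul, mul_zero, zero_div,
      sub_zero, Nat.choose_self, Nat.cast_one, one_mul]
    rcases (show a = b ∨ a = b + 1 ∨ a < b by omega) with hab | hab | hab
    · rw [hab]
      simp [Nat.choose_eq_zero_of_lt (show b - 1 < b by omega)]
    · rw [hab]
      simp [Nat.choose_eq_zero_of_lt (show b < b + 1 by omega),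
        Nat.choose_eq_zero_of_lt (show b - 1 < b + 1 by omega)]
    · have hma : a + 1 ≤ m := by omega
      rw [d3 b a (by omega) (by omega), d3 m a hm1 (by omega)]
      have hChm : (m.choose a : ℝ) ≠ 0 :=
        Nat.cast_ne_zero.2 (Nat.choose_pos (show a ≤ m by omega)).ne'
      have h2 : (m:ℝ) ≠ 0 := by positivity
      have h3 : ((m:ℝ) - a) ≠ 0 := by
        have : (a:ℝ) + 1 ≤ m := by exact_mod_cast hma
        intro hc; nlinarith
      have h4 : (b:ℝ) ≠ 0 := by positivity
      field_simp
      ring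

private lemma sum_ext (f : ℕ → ℝ) (n n' : ℕ) (hnn : n ≤ n')
    (hf : ∀ h, n ≤ h → f h = 0) :
    ∑ h ∈ Finset.range n, f h = ∑ h ∈ Finset.range n', f h := by
  apply Finset.sum_subset (Finset.range_subset_range.2 hnn)
  intro x hx hnx
  apply hf
  simp only [Finset.mem_range] at hx hnx
  omega

theorem stmt_6 (a : ℕ) (ha : 1 ≤ a) (k : ℤ) (hk : k ≤ 1) (z : ℝ)
    (F : ℕ → ℝ)
    (hF : ∀ b : ℕ, F b = ∑ h ∈ Finset.range (min a b + 1),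
      ((a.choose h : ℝ) * (b.choose h) / ((((a : ℤ) + b - k).toNat).choose h)) * z ^ h)
    (b : ℕ) (hb : 1 ≤ b) :
    ((a : ℝ) + b + 1 - k) * ((a : ℝ) + b - k) * F (b + 1)
      - ((a : ℝ) + b - k) * ((a : ℝ) + b + 1 - k + ((a : ℝ) - b) * z) * F b
      - (b : ℝ) * ((b : ℝ) - k) * z * F (b - 1) = 0 := by
  obtain ⟨m, hmz⟩ : ∃ m : ℕ, (a : ℤ) + b - k = m :=
    ⟨((a : ℤ) + b - k).toNat, (Int.toNat_of_nonneg (by omega)).symm⟩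
  have ht0 : ((a : ℤ) + b - k).toNat = m := by omega
  have ht1 : ((a : ℤ) + ((b + 1 : ℕ) : ℤ) - k).toNat = m + 1 := by push_cast; omega
  have ht2 : ((a : ℤ) + ((b - 1 : ℕ) : ℤ) - k).toNat = m - 1 := by
    have hcb : ((b - 1 : ℕ) : ℤ) = (b : ℤ) - 1 := by push_cast [hb]; ring
    rw [hcb]; omega
  have hmab : a + b ≤ m + 1 := by omega
  have hmR : (m : ℝ) = (a : ℝ) + b - k := by
    have := congrArg (fun t : ℤ => (t : ℝ)) hmz
    push_cast at this
    linarith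
  set N := min a (b + 1) with hN
  have hNa : N ≤ a := min_le_left _ _
  have hNb : N ≤ b + 1 := min_le_right _ _
  have hNcases := min_cases a (b + 1)
  have hNval : N = a ∨ N = b + 1 := by
    rcases hNcases with ⟨h1, _⟩ | ⟨h1, _⟩
    · exact Or.inl h1
    · exact Or.inr h1
  have hminab := min_cases a b
  have hminab' : min a b = a ∧ a ≤ b ∨ min a b = b ∧ b ≤ a := by
    rcases hminab with ⟨h1, h2⟩ | ⟨h1, h2⟩
    · exact Or.inl ⟨h1, h2⟩
    · exact Or.inr ⟨h1, by omega⟩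
  have hminab1 := min_cases a (b - 1)
  have e1 : F (b + 1) = ∑ h ∈ Finset.range (N + 2),
      (a.choose h : ℝ) * ((b+1).choose h) / ((m+1).choose h) * z ^ h := by
    rw [hF (b+1)]
    simp only [ht1, ← hN]
    apply sum_ext _ _ _ (by omega)
    intro h hh
    have : a < h ∨ b + 1 < h := by omega
    rcases this with hc | hc <;> simp [Nat.choose_eq_zero_of_lt hc]
  have e2 : F b = ∑ h ∈ Finset.range (N + 2),
      (a.choose h : ℝ) * (b.choose h) / (m.choose h) * z ^ h := by
    rw [hF b]
    simp only [ht0]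
    apply sum_ext _ _ _ (by rcases hminab' with ⟨h1, h2⟩ | ⟨h1, h2⟩ <;> omega)
    intro h hh
    have : a < h ∨ b < h := by rcases hminab' with ⟨h1, h2⟩ | ⟨h1, h2⟩ <;> omega
    rcases this with hc | hc <;> simp [Nat.choose_eq_zero_of_lt hc]
  have e3 : F (b - 1) = ∑ h ∈ Finset.range (N + 2),
      (a.choose h : ℝ) * ((b-1).choose h) / ((m-1).choose h) * z ^ h := by
    rw [hF (b-1)]
    simp only [ht2]
    apply sum_ext _ _ _ (by rcases hminab1 with ⟨h1, _⟩ | ⟨h1, _⟩ <;> omega)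
    intro h hh
    have : a < h ∨ b - 1 < h := by rcases hminab1 with ⟨h1, _⟩ | ⟨h1, _⟩ <;> omega
    rcases this with hc | hc <;> simp [Nat.choose_eq_zero_of_lt hc]
  have c1 : ((a : ℝ) + b + 1 - k) = (m : ℝ) + 1 := by linarith
  have c2 : ((a : ℝ) + b - k) = (m : ℝ) := by linarith
  have c3 : ((b : ℝ) - k) = (m : ℝ) - a := by linarith
  rw [c1, c2, c3, e1, e2, e3]
  rw [Finset.mul_sum, Finset.mul_sum, Finset.mul_sum, ← Finset.sum_sub_distrib,
    ← Finset.sum_sub_distrib]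
  have step : ∀ h ∈ Finset.range (N + 2),
      ((m:ℝ)+1) * m * ((a.choose h : ℝ) * ((b+1).choose h) / ((m+1).choose h) * z ^ h)
        - (m:ℝ) * ((m:ℝ)+1+((a:ℝ)-b)*z) * ((a.choose h : ℝ) * (b.choose h) / (m.choose h) * z ^ h)
        - (b:ℝ) * ((m:ℝ)-a) * z * ((a.choose h : ℝ) * ((b-1).choose h) / ((m-1).choose h) * z ^ h)
      = (((m:ℝ)+1) * m * ((a.choose h : ℝ) * ((b+1).choose h) / ((m+1).choose h)) * z ^ h
          - (m:ℝ) * ((m:ℝ)+1) * ((a.choose h : ℝ) * (b.choose h) / (m.choose h)) * z ^ h)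
        - ((m:ℝ) * ((a:ℝ)-b) * ((a.choose h : ℝ) * (b.choose h) / (m.choose h)) * z ^ (h+1)
          + (b:ℝ) * ((m:ℝ)-a) * ((a.choose h : ℝ) * ((b-1).choose h) / ((m-1).choose h)) * z ^ (h+1)) := by
    intro h _
    ring
  rw [Finset.sum_congr rfl step, Finset.sum_sub_distrib]
  rw [Finset.sum_range_succ' _ (N + 1), Finset.sum_range_succ _ (N + 1)]
  have A0 : ((m:ℝ)+1) * m * ((a.choose 0 : ℝ) * ((b+1).choose 0) / ((m+1).choose 0)) * z ^ 0
      - (m:ℝ) * ((m:ℝ)+1) * ((a.choose 0 : ℝ) * (b.choose 0) / (m.choose 0)) * z ^ 0 = 0 := by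
    simp only [Nat.choose_zero_right, Nat.cast_one, pow_zero]
    ring
  have Btop : (m:ℝ) * ((a:ℝ)-b) * ((a.choose (N+1) : ℝ) * (b.choose (N+1)) / (m.choose (N+1))) * z ^ (N+1+1)
      + (b:ℝ) * ((m:ℝ)-a) * ((a.choose (N+1) : ℝ) * ((b-1).choose (N+1)) / ((m-1).choose (N+1))) * z ^ (N+1+1) = 0 := by
    rcases hNval with hv | hv
    · have hc : a < N + 1 := by omega
      simp [Nat.choose_eq_zero_of_lt hc]
    · have hc : b < N + 1 := by omega
      have hc2 : b - 1 < N + 1 := by omega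
      simp [Nat.choose_eq_zero_of_lt hc, Nat.choose_eq_zero_of_lt hc2]
  rw [A0, Btop, add_zero, add_zero, ← Finset.sum_sub_distrib]
  apply Finset.sum_eq_zero
  intro h hh
  simp only [Finset.mem_range] at hh
  have hk1 := key a b m h ha hb hmab (by omega) (by omega)
  linear_combination z ^ (h + 1) * hk1
end

section
/- Let t, λ, μ > 0 with λ ≠ μ and set ξ = log(λ/μ)/(λ−μ). Then z(t,λ,μ) = ((λ/μ + μ/λ)e^{(λ−μ)t} − e^{2(λ−μ)t} − 1)/(e^{(λ−μ)t} − 1)² is strictly positive if t < ξ, zero if t = ξ, and strictly negative if t > ξ. -/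
open Real

theorem stmt_13 (t lam mu : ℝ) (ht : 0 < t) (hlam : 0 < lam) (hmu : 0 < mu) (hne : lam ≠ mu) :
    (t < Real.log (lam / mu) / (lam - mu) →
      0 < ((lam / mu + mu / lam) * Real.exp ((lam - mu) * t) - Real.exp (2 * (lam - mu) * t) - 1) /
        (Real.exp ((lam - mu) * t) - 1) ^ 2) ∧
    (t = Real.log (lam / mu) / (lam - mu) →
      ((lam / mu + mu / lam) * Real.exp ((lam - mu) * t) - Real.exp (2 * (lam - mu) * t) - 1) /
        (Real.exp ((lam - mu) * t) - 1) ^ 2 = 0) ∧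
    (t > Real.log (lam / mu) / (lam - mu) →
      ((lam / mu + mu / lam) * Real.exp ((lam - mu) * t) - Real.exp (2 * (lam - mu) * t) - 1) /
        (Real.exp ((lam - mu) * t) - 1) ^ 2 < 0) := by
  set d := lam - mu with hdd
  set x := Real.exp (d * t) with hx
  have hd : d ≠ 0 := sub_ne_zero.mpr hne
  have hr : (0:ℝ) < lam / mu := div_pos hlam hmu
  have hrlog : Real.exp (Real.log (lam / mu)) = lam / mu := Real.exp_log hr
  have hx1 : x ≠ 1 := by
    rw [hx, Ne, Real.exp_eq_one_iff]
    exact mul_ne_zero hd (ne_of_gt ht)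
  have hden : 0 < (x - 1) ^ 2 := pow_two_pos_of_ne_zero (sub_ne_zero.mpr hx1)
  have hnum : (lam / mu + mu / lam) * x - Real.exp (2 * d * t) - 1
      = -((x - lam / mu) * (x - mu / lam)) := by
    have h2 : Real.exp (2 * d * t) = x ^ 2 := by
      rw [show 2 * d * t = d * t + d * t by ring, Real.exp_add, hx]; ring
    rw [h2]
    field_simp
    ring
  rw [hnum]
  -- comparison of x with lam/mu
  have hxr : ∀ s : ℝ, (Real.exp (d * s) < lam / mu ↔ d * s < Real.log (lam / mu)) := by
    intro s
    constructor
    · intro h; rw [← hrlog] at h; exact Real.exp_lt_exp.mp h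
    · intro h; rw [← hrlog]; exact Real.exp_lt_exp.mpr h
  rcases lt_or_gt_of_ne hd with hdneg | hdpos
  · -- d < 0 : x < 1, mu/lam > 1, x - mu/lam < 0
    have hxlt1 : x < 1 := by
      rw [hx, ← Real.exp_zero, Real.exp_lt_exp]
      exact mul_neg_of_neg_of_pos hdneg ht
    have hml : 1 < mu / lam := by
      rw [lt_div_iff₀ hlam]
      have : lam < mu := by linarith [sub_neg.mp hdneg]
      linarith
    have hfac2 : x - mu / lam < 0 := by linarith
    refine ⟨?_, ?_, ?_⟩
    · intro hlt
      have h1 : Real.log (lam / mu) < d * t := by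
        have := (lt_div_iff_of_neg hdneg).mp hlt
        nlinarith [this]
      have hxgt : lam / mu < x := by
        rw [hx, ← hrlog, Real.exp_lt_exp]; exact h1
      have hfac1 : 0 < x - lam / mu := by linarith
      exact div_pos (by nlinarith) hden
    · intro heq
      have h1 : d * t = Real.log (lam / mu) := by
        rw [heq]
        field_simp
      have : x = lam / mu := by rw [hx, h1, hrlog]
      rw [this]
      simp
    · intro hgt
      have h1 : d * t < Real.log (lam / mu) := by
        have := (div_lt_iff_of_neg hdneg).mp hgt
        nlinarith [this]
      have hxlt : x < lam / mu := (hxr t).mpr h1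
      have hfac1 : x - lam / mu < 0 := by linarith
      exact div_neg_of_neg_of_pos (by nlinarith) hden
  · -- d > 0 : x > 1, mu/lam < 1, x - mu/lam > 0
    have hxgt1 : 1 < x := by
      rw [hx, ← Real.exp_zero, Real.exp_lt_exp]
      exact mul_pos hdpos ht
    have hml : mu / lam < 1 := by
      rw [div_lt_one hlam]
      linarith [sub_pos.mp hdpos]
    have hfac2 : 0 < x - mu / lam := by linarith
    refine ⟨?_, ?_, ?_⟩
    · intro hlt
      have h1 : d * t < Real.log (lam / mu) := by
        have := (lt_div_iff₀ hdpos).mp hlt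
        nlinarith [this]
      have hxlt : x < lam / mu := (hxr t).mpr h1
      have hfac1 : x - lam / mu < 0 := by linarith
      exact div_pos (by nlinarith) hden
    · intro heq
      have h1 : d * t = Real.log (lam / mu) := by
        rw [heq]
        field_simp
      have : x = lam / mu := by rw [hx, h1, hrlog]
      rw [this]
      simp
    · intro hgt
      have h1 : Real.log (lam / mu) < d * t := by
        have := (div_lt_iff₀ hdpos).mp hgt
        nlinarith [this]
      have hxgt : lam / mu < x := by
        rw [hx, ← hrlog, Real.exp_lt_exp]; exact h1
      have hfac1 : 0 < x - lam / mu := by linarith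
      exact div_neg_of_neg_of_pos (by nlinarith) hden
end

section
/- Let i, j ≥ 1 be integers and let u(x,y) be a differentiable real function. Define G(i,j)(w) = Σ_{h=0}^{min(i,j)} [i!/(i−h)! · j!/(j−h)! · (i+j−1−h)!/(i+j−1)!]·w^h/h!. Then ∂/∂x G(i,j)(u(x,y)) = (i·j/(i+j−1))·u_x(x,y)·G(i−1,j−1) evaluated with parameters shifted, i.e. equals (ij/(i+j−1))·u_x(x,y)·Σ_{h=0}^{min(i,j)−1} [(i−1)!/(i−1−h)! · (j−1)!/(j−1−h)! · (i+j−2−h)!/(i+j−2)!]·u(x,y)^h/h!. -/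
/-!
Writing `G(w) = ∑ₕ cₕ wʰ / h!`, term-by-term differentiation gives `G'(w) = ∑ₕ cₕ₊₁ wʰ / h!`.
Peeling one factor off each factorial ratio shows that the coefficients of `G(i,j)` satisfy
`cₕ₊₁(i, j, n) = (i j / n) · cₕ(i-1, j-1, n-1)` with `n = i + j - 1`, and the chain rule in `x`
finishes the proof.
-/

open Finset

open scoped Nat

theorem hasDerivAt_sum_range_mul_pow_div_factorial (c : ℕ → ℝ) (m : ℕ) (w : ℝ) :
    HasDerivAt (fun w => ∑ h ∈ range (m + 1), c h * w ^ h / h !)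
      (∑ h ∈ range m, c (h + 1) * w ^ h / h !) w := by
  have hterm : ∀ h ∈ range (m + 1), HasDerivAt (fun w => c h * w ^ h / h !)
      (c h * (h * w ^ (h - 1)) / h !) w :=
    fun h _ => ((hasDerivAt_pow h w).const_mul (c h)).div_const _
  refine (HasDerivAt.fun_sum hterm).congr_deriv ?_
  rw [sum_range_succ']
  simp only [Nat.cast_zero, zero_mul, mul_zero, zero_div, add_zero, Nat.add_sub_cancel]
  refine sum_congr rfl fun h _ => ?_
  rw [Nat.factorial_succ, Nat.cast_mul]
  field_simp

/-- `G(i,j)` is the case `n = i + j - 1`. -/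
noncomputable def hypergeomCoeff (i j n h : ℕ) : ℝ :=
  ((i ! : ℝ) / (i - h)!) * ((j ! : ℝ) / (j - h)!) * (((n - h)! : ℝ) / n !)

theorem hypergeomCoeff_succ {i j n : ℕ} (hi : 1 ≤ i) (hj : 1 ≤ j) (hn : 1 ≤ n) (h : ℕ) :
    hypergeomCoeff i j n (h + 1) = i * j / n * hypergeomCoeff (i - 1) (j - 1) (n - 1) h := by
  have hfact : ∀ {k : ℕ}, 1 ≤ k → (k ! : ℝ) = k * (k - 1)! := fun hk => by
    exact_mod_cast (Nat.mul_factorial_pred (by omega)).symm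
  have hsub : ∀ k : ℕ, k - (h + 1) = k - 1 - h := fun k => by omega
  unfold hypergeomCoeff
  rw [hsub i, hsub j, hsub n, hfact hi, hfact hj, hfact hn]
  field_simp

theorem stmt_16 (i j : ℕ) (hi : 1 ≤ i) (hj : 1 ≤ j)
    (u : ℝ → ℝ → ℝ) (x y ux : ℝ) (hu : HasDerivAt (fun s => u s y) ux x) :
    HasDerivAt
      (fun s => ∑ h ∈ Finset.range (min i j + 1),
        ((i.factorial : ℝ) / ((i - h).factorial)) * ((j.factorial : ℝ) / ((j - h).factorial)) *
          (((i + j - 1 - h).factorial : ℝ) / ((i + j - 1).factorial)) * (u s y) ^ h / (h.factorial))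
      (((i : ℝ) * j / ((i : ℝ) + j - 1)) * ux *
        ∑ h ∈ Finset.range (min i j),
          (((i - 1).factorial : ℝ) / ((i - 1 - h).factorial)) *
            (((j - 1).factorial : ℝ) / ((j - 1 - h).factorial)) *
            (((i + j - 2 - h).factorial : ℝ) / ((i + j - 2).factorial)) * (u x y) ^ h /
            (h.factorial))
      x := by
  have hG := (hasDerivAt_sum_range_mul_pow_div_factorial
    (hypergeomCoeff i j (i + j - 1)) (min i j) (u x y)).comp x hu
  refine hG.congr_deriv ?_
  have hn : ((i + j - 1 : ℕ) : ℝ) = i + j - 1 := by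
    rw [Nat.cast_sub (by omega)]
    push_cast
    ring
  have hn' : i + j - 1 - 1 = i + j - 2 := by omega
  simp only [hypergeomCoeff_succ hi hj (show 1 ≤ i + j - 1 by omega), hn, hn', mul_sum, sum_mul]
  refine sum_congr rfl fun h _ => ?_
  unfold hypergeomCoeff
  ring
end
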